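/- Let ℳ be a model category in which every object is fibrant, and (X, x : D_0 → X) a based object (D_0 cofibrant and weakly contractible). Let P be a path object of X whose first map r : X → P is a cofibration, and Ω_x X = P ×_{X×X} D_0 the loop object (pullback of (p_1,p_0) : P → X×X along (x,x) : D_0 → X×X). Then there is a canonical bijection π_1(X, x) ≅ [D_0, Ω_x X] = π_0(Ω_x X), natural in (X, x). -/

import Mathlib

/-!
STATEMENT 16: Let `ℳ` be a model category in which every object is fibrant and
`(X, x : D₀ → X)` a based object (`D₀` cofibrant and weakly contractible).  Let `P`
be a path object of `X` whose first map `r : X → P` is a cofibration, and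
`Ω_x X = P ×_{X×X} D₀` the loop object.  Then there is a bijection
`π₁(X, x) ≅ [D₀, Ω_x X] = π₀(Ω_x X)`, where `π₁(X, x)` is the set of left
homotopies from `x` to `x` up to left 2-homotopy, and `[D₀, Ω_x X]` is the set of
homotopy classes of maps `D₀ ⟶ Ω_x X`.
-/

open CategoryTheory Opposite

universe w v u

/-- A coglobular object: a category under the globe category 𝔾. -/
structure Coglob (E : Type u) [Category.{v} E] where
  D : ℕ → E
  σ : ∀ n, D n ⟶ D (n + 1)
  τ : ∀ n, D n ⟶ D (n + 1)
  relσ : ∀ n, σ n ≫ σ (n + 1) = σ n ≫ τ (n + 1)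
  relτ : ∀ n, τ n ≫ σ (n + 1) = τ n ≫ τ (n + 1)

namespace Coglob

variable {E : Type u} [Category.{v} E] (Φ : Coglob E)

/-- Iterated cosource `σ^{j+k}_j : D j ⟶ D (j+k)`. -/
def σUp (j : ℕ) : ∀ k : ℕ, Φ.D j ⟶ Φ.D (j + k)
  | 0 => 𝟙 _
  | k + 1 => σUp j k ≫ Φ.σ (j + k)

/-- Iterated cotarget `τ^{j+k}_j : D j ⟶ D (j+k)`. -/
def τUp (j : ℕ) : ∀ k : ℕ, Φ.D j ⟶ Φ.D (j + k)
  | 0 => 𝟙 _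
  | k + 1 => τUp j k ≫ Φ.τ (j + k)

lemma τUp_σ (j k : ℕ) :
    Φ.τUp j (k + 1) ≫ Φ.σ (j + k + 1) = Φ.τUp j (k + 2) := by
  show (Φ.τUp j k ≫ Φ.τ (j + k)) ≫ Φ.σ (j + k + 1) =
    (Φ.τUp j k ≫ Φ.τ (j + k)) ≫ Φ.τ (j + k + 1)
  rw [Category.assoc, Category.assoc, Φ.relτ]

lemma σUp_τ (j k : ℕ) :
    Φ.σUp j (k + 1) ≫ Φ.τ (j + k + 1) = Φ.σUp j (k + 2) := by
  show (Φ.σUp j k ≫ Φ.σ (j + k)) ≫ Φ.τ (j + k + 1) =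
    (Φ.σUp j k ≫ Φ.σ (j + k)) ≫ Φ.σ (j + k + 1)
  rw [Category.assoc, Category.assoc, Φ.relσ]

/-- Iterated cosource `D 0 ⟶ D n`. -/
def σZero : ∀ n : ℕ, Φ.D 0 ⟶ Φ.D n
  | 0 => 𝟙 _
  | n + 1 => σZero n ≫ Φ.σ n

/-- Globular parallelism of two morphisms with source a globe `D n`. -/
def Par : ∀ {n : ℕ} {Y : E}, (Φ.D n ⟶ Y) → (Φ.D n ⟶ Y) → Prop
  | 0, _, _, _ => True
  | m + 1, _, f, g => (Φ.σ m ≫ f = Φ.σ m ≫ g) ∧ (Φ.τ m ≫ f = Φ.τ m ≫ g)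

end Coglob

/-- Tables of dimensions, indexed by the dimension of the first globe: the table
`cons j d e T` glues a disk of dimension `j + d + 1` along the dimension `j` onto a
table whose first dimension is `j + e + 1` (so that both dimensions exceed the
gluing dimension, as required for a table of dimensions). -/
inductive GTable : ℕ → Type where
  | single (i : ℕ) : GTable i
  | cons (j d e : ℕ) (T : GTable (j + e + 1)) : GTable (j + d + 1)

/-- Dimension of a table: the greatest dimension appearing in it. -/
def GTable.dim : ∀ {i : ℕ}, GTable i → ℕ
  | _, .single i => i
  | _, .cons j d _ T => max (j + d + 1) T.dim


open CategoryTheory CategoryTheory.Limits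

/-- A (Quillen closed) model structure on a category: three classes of morphisms
(weak equivalences, cofibrations, fibrations) satisfying two-out-of-three,
stability under retracts, the lifting axioms and the factorization axioms.
(Completeness assumptions are imposed separately via `HasFiniteLimits` etc.) -/
structure ModelStr (M : Type u) [Category.{v} M] where
  W : MorphismProperty M
  Cof : MorphismProperty M
  Fib : MorphismProperty M
  w_comp : ∀ {A B C : M} (f : A ⟶ B) (g : B ⟶ C), W f → W g → W (f ≫ g)
  w_cancel_left : ∀ {A B C : M} (f : A ⟶ B) (g : B ⟶ C), W (f ≫ g) → W g → W f
  w_cancel_right : ∀ {A B C : M} (f : A ⟶ B) (g : B ⟶ C), W (f ≫ g) → W f → W g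
  retract_stable : ∀ {A B A' B' : M} (f : A ⟶ B) (g : A' ⟶ B')
    (iA : A ⟶ A') (rA : A' ⟶ A) (iB : B ⟶ B') (rB : B' ⟶ B),
    iA ≫ rA = 𝟙 A → iB ≫ rB = 𝟙 B → iA ≫ g = f ≫ iB → g ≫ rB = rA ≫ f →
    (W g → W f) ∧ (Cof g → Cof f) ∧ (Fib g → Fib f)
  lift_cof_tfib : ∀ {A B X Y : M} (i : A ⟶ B) (p : X ⟶ Y),
    Cof i → Fib p → W p → HasLiftingProperty i p
  lift_tcof_fib : ∀ {A B X Y : M} (i : A ⟶ B) (p : X ⟶ Y),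
    Cof i → W i → Fib p → HasLiftingProperty i p
  fact_cof_tfib : ∀ {A B : M} (f : A ⟶ B),
    ∃ (Z : M) (i : A ⟶ Z) (p : Z ⟶ B), Cof i ∧ Fib p ∧ W p ∧ i ≫ p = f
  fact_tcof_fib : ∀ {A B : M} (f : A ⟶ B),
    ∃ (Z : M) (i : A ⟶ Z) (p : Z ⟶ B), Cof i ∧ W i ∧ Fib p ∧ i ≫ p = f

namespace ModelStr

variable {M : Type u} [Category.{v} M] (ms : ModelStr M)

/-- An object is weakly contractible if `X → *` is a weak equivalence. -/
def WeaklyContractible [HasTerminal M] (X : M) : Prop := ms.W (terminal.from X)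

/-- An object is fibrant if `X → *` is a fibration. -/
def Fibrant [HasTerminal M] (X : M) : Prop := ms.Fib (terminal.from X)

/-- An object is cofibrant if `∅ → X` is a cofibration. -/
def Cofibrant [HasInitial M] (X : M) : Prop := ms.Cof (initial.to X)

end ModelStr

section GlobMC

variable {M : Type u} [Category.{v} M]

/-- The globular sums of a coglobular object in a category with pushouts:
the iterated amalgamated sum associated to a table of dimensions, together with the
inclusion of the first globe. -/
noncomputable def gsumP [HasPushouts M] (Φ : Coglob M) :
    ∀ {i : ℕ}, GTable i → Σ' (S : M), (Φ.D i ⟶ S)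
  | _, .single i => ⟨Φ.D i, 𝟙 _⟩
  | _, .cons j d e T =>
    ⟨pushout (Φ.σUp j (d + 1)) (Φ.τUp j (e + 1) ≫ (gsumP Φ T).2),
      pushout.inl _ _⟩

/-- The spheres `S_{n-1}` of a coglobular object, with the inclusion
`i_n : S_{n-1} ⟶ D_n`: `S_{-1} = ∅` and `S_n = D_n ∐_{S_{n-1}} D_n`,
`i_{n+1} = (τ_{n+1}, σ_{n+1})`. -/
noncomputable def sphereP [HasInitial M] [HasPushouts M] (Φ : Coglob M) :
    ∀ n : ℕ, Σ' (Sob : M) (i : Sob ⟶ Φ.D n), i ≫ Φ.σ n = i ≫ Φ.τ n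
  | 0 => ⟨⊥_ M, initial.to _, initial.hom_ext _ _⟩
  | n + 1 =>
    ⟨pushout (sphereP Φ n).2.1 (sphereP Φ n).2.1,
      pushout.desc (Φ.τ n) (Φ.σ n) (sphereP Φ n).2.2.symm, by
        apply pushout.hom_ext
        · rw [pushout.inl_desc_assoc, pushout.inl_desc_assoc]
          exact Φ.relτ n
        · rw [pushout.inr_desc_assoc, pushout.inr_desc_assoc]
          exact Φ.relσ n⟩

/-- A coglobular object (functor `𝔾 → M`) is cofibrant if each latching morphism
`i_n : S_{n-1} ⟶ D_n` is a cofibration. -/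
def CofibrantCoglob [HasInitial M] [HasPushouts M] (ms : ModelStr M)
    (Φ : Coglob M) : Prop :=
  ∀ n : ℕ, ms.Cof (sphereP Φ n).2.1

/-- A coglobular object is weakly contractible if each globe `D_n` is weakly
contractible. -/
def WeaklyContractibleCoglob [HasTerminal M] (ms : ModelStr M) (Φ : Coglob M) :
    Prop :=
  ∀ n : ℕ, ms.WeaklyContractible (Φ.D n)

end GlobMC

open CategoryTheory CategoryTheory.Limits

/-- A cylinder object for `A`: a factorization `A ∐ A ⟶ C ⟶ A` of the codiagonal
as a cofibration followed by a weak equivalence. -/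
structure Cyl {M : Type u} [Category.{v} M] [HasBinaryCoproducts M]
    (ms : ModelStr M) (A : M) where
  C : M
  ii : A ⨿ A ⟶ C
  s : C ⟶ A
  cof : ms.Cof ii
  weq : ms.W s
  fact : ii ≫ s = coprod.desc (𝟙 A) (𝟙 A)

/-- A left homotopy from `f` to `g` (through some cylinder object): a morphism
`h : C ⟶ B` with `h ∘ i₀ = f` and `h ∘ i₁ = g`, i.e. `h ∘ (i₁, i₀) = (g, f)`. -/
structure LeftHtpy {M : Type u} [Category.{v} M] [HasBinaryCoproducts M]
    (ms : ModelStr M) {A B : M} (f g : A ⟶ B) where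
  cyl : Cyl ms A
  h : cyl.C ⟶ B
  ends : cyl.ii ≫ h = coprod.desc g f

/-- Left 2-homotopy between two left homotopies from `f` to `g`: a map `H : D ⟶ B`
on a 2-cylinder object `D` (a factorization of `(s', s) : C' ∐_{A ∐ A} C ⟶ A` as a
cofibration followed by a weak equivalence) restricting to the two homotopies. -/
def TwoHtp {M : Type u} [Category.{v} M] [HasBinaryCoproducts M] [HasPushouts M]
    (ms : ModelStr M) {A B : M} {f g : A ⟶ B}
    (h₁ h₂ : LeftHtpy ms f g) : Prop :=
  ∃ (Dd : M) (kk : pushout h₁.cyl.ii h₂.cyl.ii ⟶ Dd) (t : Dd ⟶ A),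
    ms.Cof kk ∧ ms.W t ∧
    kk ≫ t = pushout.desc h₁.cyl.s h₂.cyl.s (by rw [h₁.cyl.fact, h₂.cyl.fact]) ∧
    ∃ H : Dd ⟶ B,
      pushout.inl _ _ ≫ kk ≫ H = h₁.h ∧ pushout.inr _ _ ≫ kk ≫ H = h₂.h

/-- The set `π₁(A, B; f, g)` : left homotopies from `f` to `g` up to left
2-homotopy. -/
def Pi1Set {M : Type u} [Category.{v} M] [HasBinaryCoproducts M] [HasPushouts M]
    (ms : ModelStr M) {A B : M} (f g : A ⟶ B) : Type _ :=
  Quot (TwoHtp ms (f := f) (g := g))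

/-- Left-homotopy of morphisms `A ⟶ B` (through some cylinder object of `A`). -/
def MapHtpRel {M : Type u} [Category.{v} M] [HasBinaryCoproducts M]
    (ms : ModelStr M) {A B : M} (u v : A ⟶ B) : Prop :=
  ∃ (cy : Cyl ms A) (H : cy.C ⟶ B), cy.ii ≫ H = coprod.desc v u


/-!
The bijection is the composite of two.

A left homotopy `h` from `g` to `f` on a cylinder `C` of `A` is matched with the endpoint
`K : A ⟶ P` of a lift `C ⟶ P` of `(g ∘ s, h) : C ⟶ X × X` through the fibration `p`
starting at the constant path `g ≫ r` (Quillen's correspondence between left and right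
homotopies). Lifts through a trivial cofibration are unique up to homotopy over `X × X`,
so `K` is well defined up to such homotopy; a 2-homotopy between two left homotopies lets
one lift be transported to the other cylinder; and a homotopy over `X × X` between
endpoints can be absorbed into the lift. Hence `π₁(A, X; f, g)` is the set of maps
`K : A ⟶ P` over `(g, f)` up to homotopy over `X × X`.

For `f = g = x` these maps are the sections of `Ω_x X ⟶ D₀`. As `D₀` is cofibrant and
contractible, every map `D₀ ⟶ Ω_x X` is homotopic to a section, and a homotopy between
two sections can be deformed to lie over the constant homotopy of `D₀`, that is, to a
homotopy over `X × X`.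
-/

open HomotopicalAlgebra MorphismProperty

namespace ModelStr

variable {M : Type u} [Category.{v} M] (ms : ModelStr M)

lemma of_retractArrow {A B A' B' : M} {f : A ⟶ B} {g : A' ⟶ B'} (h : RetractArrow f g) :
    (ms.W g → ms.W f) ∧ (ms.Cof g → ms.Cof f) ∧ (ms.Fib g → ms.Fib f) :=
  ms.retract_stable _ _ _ _ _ _ h.retract_left h.retract_right h.i_w h.r_w.symm

@[reducible]
noncomputable def toModelCategory [HasFiniteLimits M] [HasFiniteColimits M] :
    ModelCategory M where
  categoryWithFibrations := ⟨ms.Fib⟩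
  categoryWithCofibrations := ⟨ms.Cof⟩
  categoryWithWeakEquivalences := ⟨ms.W⟩
  cm2 :=
    { comp_mem := ms.w_comp
      of_postcomp := fun f g hg hfg => ms.w_cancel_left f g hfg hg
      of_precomp := fun f g hf hfg => ms.w_cancel_right f g hfg hf }
  cm3a := ⟨fun h => (ms.of_retractArrow h).1⟩
  cm3b := ⟨fun h => (ms.of_retractArrow h).2.2⟩
  cm3c := ⟨fun h => (ms.of_retractArrow h).2.1⟩
  cm4a i p hi hi' hp := ms.lift_tcof_fib i p hi.mem hi'.mem hp.mem
  cm4b i p hi hp hp' := ms.lift_cof_tfib i p hi.mem hp.mem hp'.mem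
  cm5a := ⟨fun f => by
    obtain ⟨Z, i, p, hi, hi', hp, fac⟩ := ms.fact_tcof_fib f
    exact ⟨{ Z, i, p, fac, hi := ⟨hi, hi'⟩, hp }⟩⟩
  cm5b := ⟨fun f => by
    obtain ⟨Z, i, p, hi, hp, hp', fac⟩ := ms.fact_cof_tfib f
    exact ⟨{ Z, i, p, fac, hi, hp := ⟨hp, hp'⟩ }⟩⟩

end ModelStr

section

variable {C : Type u} [Category.{v} C] [ModelCategory C]

variable (C) in
def HomotopicalAlgebra.ModelCategory.toModelStr : ModelStr C where
  W := weakEquivalences C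
  Cof := cofibrations C
  Fib := fibrations C
  w_comp f g := (weakEquivalences C).comp_mem f g
  w_cancel_left f g hfg hg := (weakEquivalences C).of_postcomp f g hg hfg
  w_cancel_right f g hfg hf := (weakEquivalences C).of_precomp f g hf hfg
  retract_stable f g iA rA iB rB hA hB hi hr := by
    let h : RetractArrow f g :=
      { i := Arrow.homMk' iA iB hi
        r := Arrow.homMk' rA rB hr.symm
        retract := by ext <;> simp [hA, hB] }
    exact ⟨MorphismProperty.of_retract h, MorphismProperty.of_retract h,
      MorphismProperty.of_retract h⟩
  lift_cof_tfib i p hi hp hp' := by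
    have := (cofibration_iff i).2 hi
    have := (fibration_iff p).2 hp
    have := (weakEquivalence_iff p).2 hp'
    infer_instance
  lift_tcof_fib i p hi hi' hp := by
    have := (cofibration_iff i).2 hi
    have := (weakEquivalence_iff i).2 hi'
    have := (fibration_iff p).2 hp
    infer_instance
  fact_cof_tfib f := by
    let d := factorizationData (cofibrations C) (trivialFibrations C) f
    exact ⟨d.Z, d.i, d.p, d.hi, d.hp.1, d.hp.2, d.fac⟩
  fact_tcof_fib f := by
    let d := factorizationData (trivialCofibrations C) (fibrations C) f
    exact ⟨d.Z, d.i, d.p, d.hi.1, d.hi.2, d.hp, d.fac⟩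

namespace Cyl

variable {A : C} (cy : Cyl (ModelCategory.toModelStr C) A)

@[simp]
lemma inl_ii_s : coprod.inl ≫ cy.ii ≫ cy.s = 𝟙 A := by
  rw [cy.fact, coprod.inl_desc]

@[simp]
lemma inr_ii_s : coprod.inr ≫ cy.ii ≫ cy.s = 𝟙 A := by
  rw [cy.fact, coprod.inr_desc]

@[simp]
lemma inl_ii_s_assoc {Z : C} (k : A ⟶ Z) : coprod.inl ≫ cy.ii ≫ cy.s ≫ k = k := by
  rw [reassoc_of% cy.inl_ii_s]

@[simp]
lemma inr_ii_s_assoc {Z : C} (k : A ⟶ Z) : coprod.inr ≫ cy.ii ≫ cy.s ≫ k = k := by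
  rw [reassoc_of% cy.inr_ii_s]

instance : Cofibration cy.ii := ⟨cy.cof⟩

instance : WeakEquivalence cy.s := ⟨cy.weq⟩

instance : WeakEquivalence (coprod.inl ≫ cy.ii) :=
  weakEquivalence_of_postcomp_of_fac (g := cy.s) (by rw [Category.assoc, inl_ii_s])

noncomputable abbrev toCylinder : Cylinder A where
  I := cy.C
  i₀ := coprod.inl ≫ cy.ii
  i₁ := coprod.inr ≫ cy.ii
  π := cy.s

lemma toCylinder_i : cy.toCylinder.i = cy.ii := by
  ext
  · exact cy.toCylinder.inl_i
  · exact cy.toCylinder.inr_i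

instance : cy.toCylinder.IsGood where
  cofibration_i := by rw [toCylinder_i]; infer_instance

noncomputable abbrev ofCylinder (P : Cylinder A) [P.IsGood] :
    Cyl (ModelCategory.toModelStr C) A where
  C := P.I
  ii := P.i
  s := P.π
  cof := (cofibration_iff _).1 inferInstance
  weq := (weakEquivalence_iff _).1 inferInstance
  fact := by
    ext
    · rw [P.inl_i_assoc, P.i₀_π]; exact (coprod.inl_desc _ _).symm
    · rw [P.inr_i_assoc, P.i₁_π]; exact (coprod.inr_desc _ _).symm

end Cyl

lemma HomotopicalAlgebra.mapHtpRel_iff {A B : C} (u v : A ⟶ B) :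
    MapHtpRel (ModelCategory.toModelStr C) u v ↔ LeftHomotopyRel u v := by
  constructor
  · rintro ⟨cy, H, hH⟩
    refine LeftHomotopyRel.symm ⟨cy.toCylinder, ⟨{ h := H, h₀ := ?_, h₁ := ?_ }⟩⟩
    · rw [Category.assoc, hH]; exact coprod.inl_desc _ _
    · rw [Category.assoc, hH]; exact coprod.inr_desc _ _
  · intro h
    obtain ⟨P, _, ⟨H⟩⟩ := h.symm.exists_good_cylinder
    refine ⟨Cyl.ofCylinder P, H.h, ?_⟩
    ext
    · rw [P.inl_i_assoc, H.h₀]; exact (coprod.inl_desc _ _).symm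
    · rw [P.inr_i_assoc, H.h₁]; exact (coprod.inr_desc _ _).symm

namespace HomotopicalAlgebra

/-- A path object for `p` in the category over `B`. -/
structure FiberwisePathObject {P B : C} (p : P ⟶ B) where
  I : C
  ι : P ⟶ I
  q : I ⟶ pullback p p
  ι_q : ι ≫ q = pullback.lift (𝟙 P) (𝟙 P) rfl
  [weakEquivalence_ι : WeakEquivalence ι]
  [fibration_q : Fibration q]

namespace FiberwisePathObject

attribute [instance] weakEquivalence_ι fibration_q

variable {P B : C} {p : P ⟶ B}

instance : Nonempty (FiberwisePathObject p) :=
  let d := factorizationData (trivialCofibrations C) (fibrations C)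
    (pullback.lift (𝟙 P) (𝟙 P) rfl : P ⟶ pullback p p)
  ⟨{ I := d.Z, ι := d.i, q := d.p, ι_q := d.fac }⟩

variable (Q : FiberwisePathObject p)

noncomputable abbrev p₀ : Q.I ⟶ P := Q.q ≫ pullback.fst p p

noncomputable abbrev p₁ : Q.I ⟶ P := Q.q ≫ pullback.snd p p

@[simp]
lemma ι_p₀ : Q.ι ≫ Q.p₀ = 𝟙 P := by
  rw [← Category.assoc, Q.ι_q, pullback.lift_fst]

@[simp]
lemma ι_p₁ : Q.ι ≫ Q.p₁ = 𝟙 P := by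
  rw [← Category.assoc, Q.ι_q, pullback.lift_snd]

lemma p₀_comp : Q.p₀ ≫ p = Q.p₁ ≫ p := by
  rw [Category.assoc, Category.assoc, pullback.condition]

instance [Fibration p] : Fibration Q.p₀ := by dsimp only [p₀]; infer_instance

instance [Fibration p] : Fibration Q.p₁ := by dsimp only [p₁]; infer_instance

instance : WeakEquivalence Q.p₀ := weakEquivalence_of_precomp_of_fac Q.ι_p₀

instance : WeakEquivalence Q.p₁ := weakEquivalence_of_precomp_of_fac Q.ι_p₁

def Homotopic {A : C} (K K' : A ⟶ P) : Prop :=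
  ∃ N : A ⟶ Q.I, N ≫ Q.p₀ = K ∧ N ≫ Q.p₁ = K'

variable {Q} in
lemma Homotopic.precomp {A A' : C} {K K' : A ⟶ P} (h : Q.Homotopic K K') (j : A' ⟶ A) :
    Q.Homotopic (j ≫ K) (j ≫ K') := by
  obtain ⟨N, h₀, h₁⟩ := h
  exact ⟨j ≫ N, by rw [Category.assoc, h₀], by rw [Category.assoc, h₁]⟩

lemma homotopic_of_precomp_eq {A A' : C} (i : A' ⟶ A) [Cofibration i] [WeakEquivalence i]
    {G G' : A ⟶ P} (h₀ : i ≫ G = i ≫ G') (h : G ≫ p = G' ≫ p) : Q.Homotopic G G' := by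
  have sq : CommSq (i ≫ G ≫ Q.ι) i Q.q (pullback.lift G G' h) :=
    ⟨by ext <;> simp [h₀, pullback.lift_fst, pullback.lift_snd]⟩
  exact ⟨sq.lift, by simp [pullback.lift_fst], by simp [pullback.lift_snd]⟩

def HomotopyClassOver {A : C} (b : A ⟶ B) : Type _ :=
  Quot fun K K' : {K : A ⟶ P // K ≫ p = b} => Q.Homotopic K.1 K'.1

end FiberwisePathObject

lemma weakEquivalence_comp_fst {X P : C} {r : X ⟶ P} {p : P ⟶ X ⨯ X} [WeakEquivalence r]
    (hrp : r ≫ p = prod.lift (𝟙 X) (𝟙 X)) : WeakEquivalence (p ≫ prod.fst) :=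
  weakEquivalence_of_precomp_of_fac (f := r) (by rw [← Category.assoc, hrp, prod.lift_fst])

end HomotopicalAlgebra

namespace LeftHtpy

variable {A X P : C} {f g : A ⟶ X} {r : X ⟶ P} {p : P ⟶ X ⨯ X}

@[simp]
lemma inl_ii_h (h : LeftHtpy (ModelCategory.toModelStr C) f g) :
    coprod.inl ≫ h.cyl.ii ≫ h.h = g := by
  rw [h.ends]; exact coprod.inl_desc _ _

@[simp]
lemma inr_ii_h (h : LeftHtpy (ModelCategory.toModelStr C) f g) :
    coprod.inr ≫ h.cyl.ii ≫ h.h = f := by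
  rw [h.ends]; exact coprod.inr_desc _ _

variable (r p) in
def IsLiftEnd (h : LeftHtpy (ModelCategory.toModelStr C) f g) (K : A ⟶ P) : Prop :=
  ∃ G : h.cyl.C ⟶ P, h.cyl.ii ≫ G = coprod.desc (g ≫ r) K ∧
    G ≫ p = prod.lift (h.cyl.s ≫ g) h.h

lemma IsLiftEnd.comp_eq {h : LeftHtpy (ModelCategory.toModelStr C) f g} {K : A ⟶ P}
    (hK : h.IsLiftEnd r p K) : K ≫ p = prod.lift g f := by
  obtain ⟨G, hGi, hGp⟩ := hK
  have : coprod.inr ≫ h.cyl.ii ≫ G = K := by rw [hGi, coprod.inr_desc]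
  rw [← this, Category.assoc, Category.assoc, hGp]
  ext <;> simp [prod.lift_fst, prod.lift_snd]

lemma exists_isLiftEnd [IsCofibrant A] [Fibration p] (hrp : r ≫ p = prod.lift (𝟙 X) (𝟙 X))
    (h : LeftHtpy (ModelCategory.toModelStr C) f g) : ∃ K, h.IsLiftEnd r p K := by
  have sq : CommSq (g ≫ r) (coprod.inl ≫ h.cyl.ii) p (prod.lift (h.cyl.s ≫ g) h.h) := ⟨by
    rw [Category.assoc, hrp]; ext <;> simp [prod.lift_fst, prod.lift_snd]⟩
  refine ⟨coprod.inr ≫ h.cyl.ii ≫ sq.lift, sq.lift, ?_, sq.fac_right⟩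
  ext
  · rw [coprod.inl_desc, ← Category.assoc, sq.fac_left]
  · simp [coprod.inr_desc]

lemma exists_isLiftEnd_of_comp_eq [IsFibrant X] [Fibration p] [WeakEquivalence r]
    (hrp : r ≫ p = prod.lift (𝟙 X) (𝟙 X)) {K : A ⟶ P} (hK : K ≫ p = prod.lift g f) :
    ∃ h : LeftHtpy (ModelCategory.toModelStr C) f g, h.IsLiftEnd r p K := by
  have := weakEquivalence_comp_fst hrp
  obtain ⟨Cy, _⟩ := Cylinder.exists_very_good A
  obtain ⟨cy⟩ : Nonempty (Cyl (ModelCategory.toModelStr C) A) := ⟨Cyl.ofCylinder Cy⟩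
  have sq : CommSq (coprod.desc (g ≫ r) K) cy.ii (p ≫ prod.fst) (cy.s ≫ g) := ⟨by
    ext <;> simp [coprod.inl_desc, coprod.inr_desc, reassoc_of% hrp, reassoc_of% hK,
      prod.lift_fst]⟩
  have hends : coprod.desc (g ≫ r) K ≫ p ≫ prod.snd = coprod.desc g f := by
    ext <;> simp [coprod.inl_desc, coprod.inr_desc, reassoc_of% hrp, reassoc_of% hK,
      prod.lift_snd]
  refine ⟨⟨cy, sq.lift ≫ p ≫ prod.snd, ?_⟩, sq.lift, sq.fac_left, ?_⟩
  · rw [sq.fac_left_assoc]; exact hends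
  · ext
    · simp [sq.fac_right, prod.lift_fst]
    · simp [prod.lift_snd]

lemma IsLiftEnd.homotopic [IsCofibrant A] (Q : FiberwisePathObject p)
    {h : LeftHtpy (ModelCategory.toModelStr C) f g} {K K' : A ⟶ P}
    (hK : h.IsLiftEnd r p K) (hK' : h.IsLiftEnd r p K') : Q.Homotopic K K' := by
  obtain ⟨G, hGi, hGp⟩ := hK
  obtain ⟨G', hG'i, hG'p⟩ := hK'
  have := (Q.homotopic_of_precomp_eq (coprod.inl ≫ h.cyl.ii) (G := G) (G' := G')
    (by simp [hGi, hG'i, coprod.inl_desc]) (by rw [hGp, hG'p])).precomp (coprod.inr ≫ h.cyl.ii)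
  simpa [hGi, hG'i, coprod.inr_desc] using this

lemma IsLiftEnd.of_homotopic [Fibration p] {Q : FiberwisePathObject p}
    {h : LeftHtpy (ModelCategory.toModelStr C) f g} {K₁ K₂ : A ⟶ P}
    (hK₂ : h.IsLiftEnd r p K₂) (hQ : Q.Homotopic K₁ K₂) : h.IsLiftEnd r p K₁ := by
  obtain ⟨G, hGi, hGp⟩ := hK₂
  obtain ⟨N, hN₀, hN₁⟩ := hQ
  have sq : CommSq (coprod.desc (g ≫ r ≫ Q.ι) N) h.cyl.ii Q.p₁ G := ⟨by
    rw [hGi]; ext <;> simp [coprod.inl_desc, coprod.inr_desc, hN₁]⟩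
  refine ⟨sq.lift ≫ Q.p₀, ?_, ?_⟩
  · rw [sq.fac_left_assoc]
    ext <;> simp [coprod.inl_desc, coprod.inr_desc, hN₀]
  · rw [Category.assoc, Q.p₀_comp, sq.fac_right_assoc, hGp]

lemma IsLiftEnd.of_twoHtp [Fibration p] {h₁ h₂ : LeftHtpy (ModelCategory.toModelStr C) f g}
    {K : A ⟶ P} (T : TwoHtp (ModelCategory.toModelStr C) h₁ h₂) (hK : h₁.IsLiftEnd r p K) :
    h₂.IsLiftEnd r p K := by
  obtain ⟨G, hGi, hGp⟩ := hK
  obtain ⟨D, k, t, hk, ht, hkt, H, hH₁, hH₂⟩ := T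
  have : Cofibration k := ⟨hk⟩
  have : WeakEquivalence t := ⟨ht⟩
  have : WeakEquivalence (pushout.inl h₁.cyl.ii h₂.cyl.ii ≫ k) :=
    weakEquivalence_of_postcomp_of_fac (g := t) (by rw [Category.assoc, hkt, pushout.inl_desc])
  have sq : CommSq G (pushout.inl h₁.cyl.ii h₂.cyl.ii ≫ k) p (prod.lift (t ≫ g) H) := ⟨by
    ext
    · simp [hGp, prod.lift_fst, reassoc_of% hkt, pushout.inl_desc_assoc]
    · simp [hGp, prod.lift_snd, hH₁]⟩
  refine ⟨pushout.inr _ _ ≫ k ≫ sq.lift, ?_, ?_⟩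
  · rw [← hGi, ← pushout.condition_assoc, ← Category.assoc (pushout.inl _ _) k, sq.fac_left]
  · simp [sq.fac_right, hH₂, reassoc_of% hkt, pushout.inr_desc_assoc]

lemma twoHtp_of_isLiftEnd [IsFibrant X] [Fibration p] [WeakEquivalence r]
    (hrp : r ≫ p = prod.lift (𝟙 X) (𝟙 X)) {h₁ h₂ : LeftHtpy (ModelCategory.toModelStr C) f g}
    {K : A ⟶ P} (hK₁ : h₁.IsLiftEnd r p K) (hK₂ : h₂.IsLiftEnd r p K) :
    TwoHtp (ModelCategory.toModelStr C) h₁ h₂ := by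
  have := weakEquivalence_comp_fst hrp
  obtain ⟨G₁, hG₁i, hG₁p⟩ := hK₁
  obtain ⟨G₂, hG₂i, hG₂p⟩ := hK₂
  obtain ⟨D, k, t, hk, -, ht, hkt⟩ := (ModelCategory.toModelStr C).fact_cof_tfib
    (pushout.desc h₁.cyl.s h₂.cyl.s (by rw [h₁.cyl.fact, h₂.cyl.fact]))
  have : Cofibration k := ⟨hk⟩
  have sq : CommSq (pushout.desc G₁ G₂ (by rw [hG₁i, hG₂i])) k (p ≫ prod.fst) (t ≫ g) := ⟨by
    ext
    · simp [pushout.inl_desc_assoc, reassoc_of% hkt, reassoc_of% hG₁p, prod.lift_fst]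
    · simp [pushout.inr_desc_assoc, reassoc_of% hkt, reassoc_of% hG₂p, prod.lift_fst]⟩
  refine ⟨D, k, t, hk, ht, hkt, sq.lift ≫ p ≫ prod.snd, ?_, ?_⟩
  · simp [reassoc_of% sq.fac_left, pushout.inl_desc_assoc, reassoc_of% hG₁p, prod.lift_snd]
  · simp [reassoc_of% sq.fac_left, pushout.inr_desc_assoc, reassoc_of% hG₂p, prod.lift_snd]

end LeftHtpy

noncomputable def pi1SetEquivHomotopyClassOver {A X P : C} {f g : A ⟶ X} {r : X ⟶ P}
    {p : P ⟶ X ⨯ X} [IsCofibrant A] [IsFibrant X] [Fibration p] [WeakEquivalence r]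
    (hrp : r ≫ p = prod.lift (𝟙 X) (𝟙 X)) (Q : FiberwisePathObject p) :
    Pi1Set (ModelCategory.toModelStr C) f g ≃ Q.HomotopyClassOver (prod.lift g f) := by
  choose K hK using LeftHtpy.exists_isLiftEnd (f := f) (g := g) hrp
  choose h hh using fun K : {K : A ⟶ P // K ≫ p = prod.lift g f} =>
    LeftHtpy.exists_isLiftEnd_of_comp_eq hrp K.2
  exact
    { toFun := Quot.lift (fun h => Quot.mk _ ⟨K h, (hK h).comp_eq⟩) fun h₁ h₂ T =>
        Quot.sound (((hK h₁).of_twoHtp T).homotopic Q (hK h₂))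
      invFun := Quot.lift (fun K => Quot.mk _ (h K)) fun K₁ K₂ hQ =>
        Quot.sound (LeftHtpy.twoHtp_of_isLiftEnd hrp (hh K₁) ((hh K₂).of_homotopic hQ))
      left_inv := Quot.ind fun h' =>
        Quot.sound (LeftHtpy.twoHtp_of_isLiftEnd hrp (hh _) (hK h'))
      right_inv := Quot.ind fun K' => Quot.sound ((hK _).homotopic Q (hh K')) }

namespace HomotopicalAlgebra

lemma Cylinder.LeftHomotopy.exists_vertical {A E B : C} [IsFibrant B]
    [WeakEquivalence (terminal.from B)] {P : Cylinder A} [P.IsGood] {u₀ u₁ : A ⟶ E}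
    (H : P.LeftHomotopy u₀ u₁) (q : E ⟶ B) [Fibration q] (hu : u₀ ≫ q = u₁ ≫ q) :
    ∃ H' : P.LeftHomotopy u₀ u₁, H'.h ≫ q = P.π ≫ u₀ ≫ q := by
  -- `H.h ≫ q` and the constant homotopy agree on the ends of the cylinder; as `B` is
  -- contractible they extend over a cylinder `d.Z` of `P.I` relative to the ends, and lifting
  -- that along `q` from the end `H.h` deforms `H` into a homotopy over the constant one.
  let d := factorizationData (cofibrations C) (trivialFibrations C)
    (pushout.desc (𝟙 P.I) (𝟙 P.I) rfl : pushout P.i P.i ⟶ P.I)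
  have hends : P.i ≫ H.h ≫ q = P.i ≫ P.π ≫ u₀ ≫ q := by
    ext <;> simp [Precylinder.inl_i_assoc, Precylinder.inr_i_assoc, hu]
  have sq₁ : CommSq (pushout.desc (H.h ≫ q) (P.π ≫ u₀ ≫ q) hends) d.i (terminal.from B)
      (terminal.from _) := ⟨terminal.hom_ext _ _⟩
  have : WeakEquivalence (pushout.inl P.i P.i ≫ d.i) :=
    weakEquivalence_of_postcomp_of_fac (g := d.p) (by rw [Category.assoc, d.fac, pushout.inl_desc])
  have sq₂ : CommSq H.h (pushout.inl P.i P.i ≫ d.i) q sq₁.lift :=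
    ⟨by rw [Category.assoc, sq₁.fac_left, pushout.inl_desc]⟩
  have hglue : P.i ≫ pushout.inr P.i P.i ≫ d.i ≫ sq₂.lift = P.i ≫ H.h := by
    rw [← pushout.condition_assoc, ← Category.assoc (pushout.inl P.i P.i), sq₂.fac_left]
  refine ⟨{ h := pushout.inr P.i P.i ≫ d.i ≫ sq₂.lift, h₀ := ?_, h₁ := ?_ }, ?_⟩
  · simpa [Precylinder.inl_i_assoc] using coprod.inl ≫= hglue
  · simpa [Precylinder.inr_i_assoc] using coprod.inr ≫= hglue
  · simp [sq₂.fac_right, sq₁.fac_left, pushout.inr_desc]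

variable {A P B : C} {p : P ⟶ B} {b : A ⟶ B}

noncomputable def pullbackSection (K : {K : A ⟶ P // K ≫ p = b}) : A ⟶ pullback p b :=
  pullback.lift K.1 (𝟙 A) (by rw [K.2, Category.id_comp])

@[simp]
lemma pullbackSection_fst (K : {K : A ⟶ P // K ≫ p = b}) :
    pullbackSection K ≫ pullback.fst p b = K.1 :=
  pullback.lift_fst _ _ _

@[simp]
lemma pullbackSection_snd (K : {K : A ⟶ P // K ≫ p = b}) :
    pullbackSection K ≫ pullback.snd p b = 𝟙 A :=
  pullback.lift_snd _ _ _

lemma exists_leftHomotopyRel_pullbackSection [IsCofibrant A] [IsFibrant A]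
    [WeakEquivalence (terminal.from A)] [Fibration p] (u : A ⟶ pullback p b) :
    ∃ K, LeftHomotopyRel u (pullbackSection K) := by
  have hcontr : LeftHomotopyRel (u ≫ pullback.snd p b) (𝟙 A) := by
    rw [← LeftHomotopyClass.mk_eq_mk_iff]
    apply (LeftHomotopyClass.postcomp_bijective_of_fibration_of_weakEquivalence A
      (terminal.from A)).1
    simp only [LeftHomotopyClass.postcomp_mk]
    congr 1
    exact terminal.hom_ext _ _
  obtain ⟨Cy, _, ⟨H⟩⟩ := hcontr.exists_good_cylinder
  obtain ⟨l, H', hH'⟩ := H.covering_homotopy (pullback.snd p b) u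
  have hl : l ≫ pullback.snd p b = 𝟙 A := by rw [← H'.h₁, Category.assoc, hH', H.h₁]
  refine ⟨⟨l ≫ pullback.fst p b, ?_⟩, ?_⟩
  · rw [Category.assoc, pullback.condition, reassoc_of% hl]
  · convert H'.leftHomotopyRel
    ext
    · simp
    · simp [hl]

namespace FiberwisePathObject

variable (Q : FiberwisePathObject p)

lemma leftHomotopyRel_of_homotopic [Fibration p] {K K' : {K : A ⟶ P // K ≫ p = b}}
    (hQ : Q.Homotopic K.1 K'.1) : LeftHomotopyRel (pullbackSection K) (pullbackSection K') := by
  obtain ⟨N, hN₀, hN₁⟩ := hQ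
  obtain ⟨Cy, _⟩ := Cylinder.exists_very_good A
  have sq : CommSq (coprod.desc N (K'.1 ≫ Q.ι)) Cy.i Q.p₁ (Cy.π ≫ K'.1) := ⟨by
    ext <;> simp [coprod.inl_desc, coprod.inr_desc, Precylinder.inl_i_assoc,
      Precylinder.inr_i_assoc, hN₁]⟩
  have hL : (sq.lift ≫ Q.p₀) ≫ p = Cy.π ≫ b := by
    rw [Category.assoc, Q.p₀_comp, ← Category.assoc, sq.fac_right, Category.assoc, K'.2]
  refine ⟨Cy, ⟨{ h := pullback.lift (sq.lift ≫ Q.p₀) Cy.π hL, h₀ := ?_, h₁ := ?_ }⟩⟩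
  · ext
    · simp [pullback.lift_fst, ← Precylinder.inl_i_assoc, sq.fac_left_assoc,
        coprod.inl_desc, hN₀]
    · simp [pullback.lift_snd]
  · ext
    · simp [pullback.lift_fst, ← Precylinder.inr_i_assoc, sq.fac_left_assoc,
        coprod.inr_desc]
    · simp [pullback.lift_snd]

lemma homotopic_of_leftHomotopyRel [IsCofibrant A] [IsFibrant A]
    [WeakEquivalence (terminal.from A)] [Fibration p] {K K' : {K : A ⟶ P // K ≫ p = b}}
    (h : LeftHomotopyRel (pullbackSection K) (pullbackSection K')) : Q.Homotopic K.1 K'.1 := by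
  obtain ⟨Cy, _, ⟨H⟩⟩ := h.exists_good_cylinder
  obtain ⟨H', hH'⟩ := H.exists_vertical (pullback.snd p b) (by simp)
  have := Q.homotopic_of_precomp_eq Cy.i₀ (G := Cy.π ≫ K.1) (G' := H'.h ≫ pullback.fst p b)
    (by simp) (by rw [Category.assoc, K.2, Category.assoc, pullback.condition, reassoc_of% hH',
      reassoc_of% (pullbackSection_snd K)])
  simpa using this.precomp Cy.i₁

noncomputable def homotopyClassOverEquivLeftHomotopyClass [IsCofibrant A] [IsFibrant A]
    [WeakEquivalence (terminal.from A)] [Fibration p] :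
    Q.HomotopyClassOver b ≃ LeftHomotopyClass A (pullback p b) :=
  Equiv.ofBijective
    (Quot.lift (fun K => LeftHomotopyClass.mk (pullbackSection K))
      fun _ _ hQ => LeftHomotopyClass.sound (Q.leftHomotopyRel_of_homotopic hQ))
    ⟨by
      rintro ⟨K⟩ ⟨K'⟩ h
      exact Quot.sound (Q.homotopic_of_leftHomotopyRel ((LeftHomotopyClass.mk_eq_mk_iff _ _).1 h)),
    by
      rintro ⟨u⟩
      obtain ⟨K, hK⟩ := exists_leftHomotopyRel_pullbackSection u
      exact ⟨Quot.mk _ K, (LeftHomotopyClass.sound hK).symm⟩⟩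

end FiberwisePathObject

end HomotopicalAlgebra

end

theorem pi1_iso_pi0_loop_general {M : Type u} [Category.{v} M]
    [HasFiniteLimits M] [HasFiniteColimits M] [HasBinaryCoproducts M]
    [HasPushouts M] [HasBinaryProducts M] [HasPullbacks M]
    (ms : ModelStr M) (hfib : ∀ Z : M, ms.Fibrant Z)
    -- the based object `(X, x : D₀ → X)`
    (D0 : M) (hD0cof : ms.Cofibrant D0) (hD0wc : ms.WeaklyContractible D0)
    (X : M) (x : D0 ⟶ X)
    -- a path object `P` of `X` with `r` a cofibration
    (P : M) (r : X ⟶ P) (p : P ⟶ X ⨯ X)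
    (hrW : ms.W r) (hpFib : ms.Fib p)
    (hfact : r ≫ p = prod.lift (𝟙 X) (𝟙 X)) :
    -- `π₁(X, x) ≅ π₀(Ω_x X) = [D₀, Ω_x X]`
    Nonempty (Pi1Set ms x x ≃
      Quot (MapHtpRel ms (A := D0) (B := pullback p (prod.lift x x)))) := by
  let := ms.toModelCategory
  have : IsCofibrant D0 := ⟨hD0cof⟩
  have : IsFibrant D0 := ⟨hfib D0⟩
  have : IsFibrant X := ⟨hfib X⟩
  have : WeakEquivalence (terminal.from D0) := ⟨hD0wc⟩
  have : WeakEquivalence r := ⟨hrW⟩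
  have : Fibration p := ⟨hpFib⟩
  obtain ⟨Q⟩ : Nonempty (FiberwisePathObject p) := inferInstance
  -- `ModelCategory.toModelStr M` is `ms` up to structure eta, so the equivalences below
  -- typecheck against `ms`.
  exact ⟨(pi1SetEquivHomotopyClassOver hfact Q).trans <|
    Q.homotopyClassOverEquivLeftHomotopyClass.trans (Quot.congrRight mapHtpRel_iff).symm⟩

theorem pi1_iso_pi0_loop {M : Type u} [Category.{v} M]
    [HasFiniteLimits M] [HasFiniteColimits M] [HasBinaryCoproducts M]
    [HasPushouts M] [HasBinaryProducts M] [HasPullbacks M]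
    (ms : ModelStr M) (hfib : ∀ Z : M, ms.Fibrant Z)
    -- the based object `(X, x : D₀ → X)`
    (D0 : M) (hD0cof : ms.Cofibrant D0) (hD0wc : ms.WeaklyContractible D0)
    (X : M) (x : D0 ⟶ X)
    -- a path object `P` of `X` with `r` a cofibration
    (P : M) (r : X ⟶ P) (p : P ⟶ X ⨯ X)
    (hrW : ms.W r) (hrCof : ms.Cof r) (hpFib : ms.Fib p)
    (hfact : r ≫ p = prod.lift (𝟙 X) (𝟙 X)) :
    -- `π₁(X, x) ≅ π₀(Ω_x X) = [D₀, Ω_x X]`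
    Nonempty (Pi1Set ms x x ≃
      Quot (MapHtpRel ms (A := D0) (B := pullback p (prod.lift x x)))) :=
  pi1_iso_pi0_loop_general ms hfib D0 hD0cof hD0wc X x P r p hrW hpFib hfact
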